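/- Let h_1 ≤ h_2 ≤ ... ≤ h_N be nonnegative reals with h_1 = 0 and suppose that for some index i the denominator (i−1)h_i − (h_1 + ... + h_{i−1}) is positive. Then for any nonincreasing-to-0 sequence r_1 ≥ r_2 ≥ ... ≥ r_N = 0, the quantity min over chains 1 = i_0 < i_1 < ... < i_ℓ = N of Σ_j (r_{i_j} − r_{i_{j+1}})(h_{i_j} + h_{i_{j+1}}) is at most B · Σ_{j=1}^N r_j, where B = max_{i=2..N} h_i² / ((i−1)h_i − Σ_{j<i} h_j). -/

import Mathlib

private lemma morrison_abel (K S : ℕ → ℝ) (n : ℕ) :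
    ∑ j ∈ Finset.range n, K j * (S j - S (j+1)) =
      K 0 * S 0 - K n * S n + ∑ j ∈ Finset.range n, (K (j+1) - K j) * S (j+1) := by
  induction n with
  | zero => simp
  | succ n ih => rw [Finset.sum_range_succ, Finset.sum_range_succ, ih]; ring

/-- Morrison's combinatorial lemma. Let `h₁ ≤ … ≤ h_N` be nonnegative reals with
`h₁ = 0` and some denominator `(i-1)h_i - (h₁+⋯+h_{i-1})` positive.  Then for any
nonincreasing sequence `r₁ ≥ … ≥ r_N = 0`, the minimum over chains
`1 = i₀ < i₁ < … < i_ℓ = N` of `Σⱼ (r_{iⱼ} - r_{iⱼ₊₁})(h_{iⱼ} + h_{iⱼ₊₁})` is at most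
`B · Σⱼ rⱼ`, where `B = max_{i=2..N} h_i² / ((i-1)h_i - Σ_{j<i} h_j)`. -/
theorem stmt_7 (N : ℕ) (hN : 2 ≤ N) (h r : ℕ → ℝ)
    (hnn : ∀ i, 0 ≤ h i)
    (hmono : ∀ i j, 1 ≤ i → i ≤ j → j ≤ N → h i ≤ h j)
    (h1 : h 1 = 0)
    (hpos : ∃ i, 2 ≤ i ∧ i ≤ N ∧
      0 < ((i : ℝ) - 1) * h i - ∑ j ∈ Finset.Icc 1 (i-1), h j)
    (rmono : ∀ i j, 1 ≤ i → i ≤ j → j ≤ N → r j ≤ r i) (hrN : r N = 0)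
    (B : ℝ)
    (hB : B = (Finset.Icc 2 N).sup' (Finset.nonempty_Icc.mpr hN)
      (fun i => (h i)^2 / (((i : ℝ) - 1) * h i - ∑ j ∈ Finset.Icc 1 (i-1), h j))) :
    sInf {S : ℝ | ∃ (ℓ : ℕ) (c : ℕ → ℕ), 0 < ℓ ∧ c 0 = 1 ∧ c ℓ = N ∧
        (∀ j < ℓ, c j < c (j+1)) ∧ (∀ j ≤ ℓ, c j ≤ N) ∧
        S = ∑ j ∈ Finset.range ℓ, (r (c j) - r (c (j+1))) * (h (c j) + h (c (j+1)))}
      ≤ B * ∑ j ∈ Finset.Icc 1 N, r j := by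
  classical
  have hN1 : 1 ≤ N := le_trans one_le_two hN
  obtain ⟨i₀, hi₀2, hi₀N, hi₀pos⟩ := hpos
  have hrnn : ∀ i, 1 ≤ i → i ≤ N → 0 ≤ r i := fun i h1i hiN => hrN ▸ rmono i N h1i hiN le_rfl
  have hBnn : 0 ≤ B := by
    rw [hB]
    refine le_trans (div_nonneg (sq_nonneg (h i₀)) (le_of_lt hi₀pos))
      (Finset.le_sup' (fun i => (h i)^2 / (((i : ℝ) - 1) * h i - ∑ j ∈ Finset.Icc 1 (i-1), h j))
        (Finset.mem_Icc.mpr ⟨hi₀2, hi₀N⟩))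
  have hhi₀ : 0 < h i₀ := by
    rcases lt_or_eq_of_le (hnn i₀) with hlt | heq
    · exact hlt
    · exfalso
      have hs : 0 ≤ ∑ j ∈ Finset.Icc 1 (i₀-1), h j :=
        Finset.sum_nonneg fun j _ => hnn j
      rw [← heq] at hi₀pos
      nlinarith
  have hhN : 0 < h N := lt_of_lt_of_le hhi₀ (hmono i₀ N (le_trans one_le_two hi₀2) hi₀N le_rfl)
  -- key hypothesis reformulated
  have hden_eq : ∀ m, 2 ≤ m →
      ∑ i ∈ Finset.Icc 1 (m-1), (h m - h i)
        = ((m:ℝ)-1) * h m - ∑ i ∈ Finset.Icc 1 (m-1), h i := by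
    intro m hm2
    rw [Finset.sum_sub_distrib, Finset.sum_const, Nat.card_Icc, nsmul_eq_mul]
    have hc : (m - 1 + 1 - 1 : ℕ) = m - 1 := by omega
    rw [hc, Nat.cast_sub (by omega : 1 ≤ m), Nat.cast_one]
  have HB : ∀ m, 2 ≤ m → m ≤ N →
      h m ^ 2 ≤ B * ∑ i ∈ Finset.Icc 1 (m-1), (h m - h i) := by
    intro m hm2 hmN
    have hsub : ∀ i ∈ Finset.Icc 1 (m-1), (0:ℝ) ≤ h m - h i := by
      intro i hi
      rw [Finset.mem_Icc] at hi
      exact sub_nonneg.mpr (hmono i m hi.1 (by omega) hmN)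
    have hdnn : 0 ≤ ∑ i ∈ Finset.Icc 1 (m-1), (h m - h i) := Finset.sum_nonneg hsub
    rcases eq_or_lt_of_le hdnn with heq | hlt
    · have h1mem : (1:ℕ) ∈ Finset.Icc 1 (m-1) := Finset.mem_Icc.mpr ⟨le_refl 1, by omega⟩
      have hsingle := Finset.single_le_sum hsub h1mem
      have hm0 : h m = 0 := by
        rw [h1] at hsingle
        have := hnn m
        linarith [heq]
      rw [← heq, mul_zero, hm0]
      norm_num
    · have hle := Finset.le_sup'
        (fun i => (h i)^2 / (((i : ℝ) - 1) * h i - ∑ j ∈ Finset.Icc 1 (i-1), h j))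
        (Finset.mem_Icc.mpr ⟨hm2, hmN⟩)
      rw [← hB] at hle
      rw [← hden_eq m hm2] at hle
      rw [div_le_iff₀ hlt] at hle
      linarith
  -- the last zero of h
  have hZne : ((Finset.Icc 1 N).filter (fun i => h i = 0)).Nonempty :=
    ⟨1, Finset.mem_filter.mpr ⟨Finset.mem_Icc.mpr ⟨le_refl 1, hN1⟩, h1⟩⟩
  set z := ((Finset.Icc 1 N).filter (fun i => h i = 0)).max' hZne with hzdef
  have hzZ := Finset.max'_mem _ hZne
  rw [← hzdef, Finset.mem_filter, Finset.mem_Icc] at hzZ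
  have hz1 : 1 ≤ z := hzZ.1.1
  have hzN : z ≤ N := hzZ.1.2
  have hz0 : h z = 0 := hzZ.2
  have hzmax : ∀ i, 1 ≤ i → i ≤ N → h i = 0 → i ≤ z := by
    intro i hi1 hiN hi0
    exact Finset.le_max' _ i (Finset.mem_filter.mpr ⟨Finset.mem_Icc.mpr ⟨hi1, hiN⟩, hi0⟩)
  have hzltN : z < N := by
    rcases eq_or_lt_of_le hzN with he | hl
    · exfalso; rw [he] at hz0; exact absurd hz0 (ne_of_lt hhN).symm
    · exact hl
  -- greedy next-step function
  have hnext_ex : ∀ u, u ≤ N → h u < h N → ∃ v,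
      (u + 1 ≤ v ∧ v ≤ N ∧ h u < h v) ∧
      (∀ w, u + 1 ≤ w → w ≤ N → h u < h w →
        (r v - r u) / (h v - h u) ≤ (r w - r u) / (h w - h u)) ∧
      (h v = h N → v = N) := by
    intro u huN hult
    have huN' : u < N := by
      rcases eq_or_lt_of_le huN with he | hl
      · exfalso; rw [he] at hult; exact lt_irrefl _ hult
      · exact hl
    set C := (Finset.Icc (u+1) N).filter (fun v => h u < h v) with hC
    have hNC : N ∈ C := by
      rw [hC, Finset.mem_filter, Finset.mem_Icc]
      exact ⟨⟨huN', le_refl N⟩, hult⟩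
    obtain ⟨v₀, hv₀C, hv₀min⟩ := Finset.exists_min_image C
      (fun v => (r v - r u) / (h v - h u)) ⟨N, hNC⟩
    set A := C.filter (fun v => ∀ w ∈ C,
      (r v - r u) / (h v - h u) ≤ (r w - r u) / (h w - h u)) with hA
    have hv₀A : v₀ ∈ A := by
      rw [hA, Finset.mem_filter]; exact ⟨hv₀C, hv₀min⟩
    have hAne : A.Nonempty := ⟨v₀, hv₀A⟩
    set v := A.max' hAne with hvdef
    have hvA : v ∈ A := by rw [hvdef]; exact Finset.max'_mem _ _
    rw [hA, Finset.mem_filter] at hvA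
    have hvC := hvA.1
    have hvmin := hvA.2
    rw [hC, Finset.mem_filter, Finset.mem_Icc] at hvC
    refine ⟨v, ⟨hvC.1.1, hvC.1.2, hvC.2⟩, ?_, ?_⟩
    · intro w hw1 hw2 hw3
      exact hvmin w (by rw [hC, Finset.mem_filter, Finset.mem_Icc]; exact ⟨⟨hw1, hw2⟩, hw3⟩)
    · intro hvN
      have hNA : N ∈ A := by
        rw [hA, Finset.mem_filter]
        refine ⟨hNC, fun w hwC => le_trans ?_ (hvmin w hwC)⟩
        have hrv : r N ≤ r v := by
          rw [hrN]; exact hrnn v (by omega) hvC.1.2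
        rw [hvN]
        exact div_le_div_of_nonneg_right (by linarith) (by linarith [sub_pos.mpr hult])
      have hvge : N ≤ v := by rw [hvdef]; exact Finset.le_max' _ _ hNA
      have hvle : v ≤ N := hvC.1.2
      omega
  choose! nxt hnxt using hnext_ex
  -- the greedy chain
  obtain ⟨d, hd0, hds⟩ : ∃ d : ℕ → ℕ, d 0 = z ∧
      ∀ j, d (j+1) = if h (d j) < h N then nxt (d j) else d j :=
    ⟨fun j => Nat.rec z (fun _ u => if h u < h N then nxt u else u) j, rfl, fun _ => rfl⟩
  have hinv : ∀ j, (1 ≤ d j ∧ d j ≤ N) ∧ (h (d j) = h N → d j = N) := by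
    intro j
    induction j with
    | zero =>
      rw [hd0]
      exact ⟨⟨hz1, hzN⟩, fun he => absurd he (by rw [hz0]; exact (ne_of_lt hhN))⟩
    | succ j ih =>
      rw [hds j]
      by_cases hc : h (d j) < h N
      · rw [if_pos hc]
        obtain ⟨⟨hv1, hvN, _⟩, _, hprop⟩ := hnxt (d j) ih.1.2 hc
        exact ⟨⟨by omega, hvN⟩, hprop⟩
      · rw [if_neg hc]
        exact ih
  have habsorb : ∀ j, d j = N → d (j+1) = N := by
    intro j hj
    rw [hds j, hj, if_neg (lt_irrefl _)]
  have hltN : ∀ j, d j ≠ N → h (d j) < h N := by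
    intro j hj
    exact lt_of_le_of_ne (hmono (d j) N (hinv j).1.1 (hinv j).1.2 le_rfl)
      (fun he => hj ((hinv j).2 he))
  have hstep : ∀ j, d j ≠ N →
      d (j+1) = nxt (d j) ∧ d j < d (j+1) ∧ h (d j) < h (d (j+1)) := by
    intro j hj
    have hc := hltN j hj
    have heq : d (j+1) = nxt (d j) := by rw [hds j, if_pos hc]
    obtain ⟨⟨hv1, _, hvlt⟩, _, _⟩ := hnxt (d j) (hinv j).1.2 hc
    refine ⟨heq, by omega, by rw [heq]; exact hvlt⟩
  have hreach : ∃ j, d j = N := by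
    have key : ∀ j, d j = N ∨ z + j ≤ d j := by
      intro j
      induction j with
      | zero => right; rw [hd0]; omega
      | succ j ih =>
        by_cases hj : d j = N
        · left; exact habsorb j hj
        · rcases ih with hN' | hle
          · exact absurd hN' hj
          · right
            have := (hstep j hj).2.1
            omega
    rcases key N with hN' | hle
    · exact ⟨N, hN'⟩
    · exfalso
      have := (hinv N).1.2
      omega
  set L := Nat.find hreach with hLdef
  have hdL : d L = N := Nat.find_spec hreach
  have hdlt : ∀ j, j < L → d j ≠ N := fun j hj => Nat.find_min hreach hj
  have hL0 : 0 < L := by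
    rcases Nat.eq_zero_or_pos L with h0 | hp
    · exfalso
      rw [h0] at hdL
      rw [hd0] at hdL
      omega
    · exact hp
  -- monotonicity of heights along the chain
  have hslt : ∀ j, j < L → h (d j) < h (d (j+1)) := fun j hj => (hstep j (hdlt j hj)).2.2
  have hsmono : ∀ a b, a ≤ b → b ≤ L → h (d a) ≤ h (d b) := by
    have key : ∀ n a, a + n ≤ L → h (d a) ≤ h (d (a + n)) := by
      intro n
      induction n with
      | zero => intro a _; exact le_refl _
      | succ n ih =>
        intro a haL
        calc h (d a) ≤ h (d (a + n)) := ih a (by omega)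
          _ ≤ h (d (a + n + 1)) := le_of_lt (hslt (a+n) (by omega))
    intro a b hab hbL
    obtain ⟨n, rfl⟩ : ∃ n, b = a + n := ⟨b - a, by omega⟩
    exact key n a hbL
  -- slopes
  obtain ⟨k, hk⟩ : ∃ k : ℕ → ℝ, ∀ j,
      k j = (r (d (j+1)) - r (d j)) / (h (d (j+1)) - h (d j)) :=
    ⟨fun j => (r (d (j+1)) - r (d j)) / (h (d (j+1)) - h (d j)), fun _ => rfl⟩
  obtain ⟨K, hK⟩ : ∃ K : ℕ → ℝ, ∀ j, K j = if j < L then k j else 0 :=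
    ⟨fun j => if j < L then k j else 0, fun _ => rfl⟩
  have hKL : K L = 0 := by rw [hK L, if_neg (lt_irrefl _)]
  have hkrel : ∀ j, j < L → r (d (j+1)) = r (d j) + k j * (h (d (j+1)) - h (d j)) := by
    intro j hj
    have hd : h (d (j+1)) - h (d j) ≠ 0 := ne_of_gt (sub_pos.mpr (hslt j hj))
    rw [hk j, div_mul_cancel₀ _ hd]
    ring
  have hρmono : ∀ j, j < L → r (d (j+1)) ≤ r (d j) := by
    intro j hj
    exact rmono (d j) (d (j+1)) (hinv j).1.1 (le_of_lt (hstep j (hdlt j hj)).2.1)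
      (hinv (j+1)).1.2
  have hknp : ∀ j, j < L → k j ≤ 0 := by
    intro j hj
    rw [hk j]
    rw [div_nonpos_iff]
    right
    exact ⟨sub_nonpos.mpr (hρmono j hj), le_of_lt (sub_pos.mpr (hslt j hj))⟩
  -- convexity of the greedy chain
  have hkconv : ∀ j, j + 1 < L → k j ≤ k (j+1) := by
    intro j hj1
    have hj : j < L := by omega
    have hs1 := hstep j (hdlt j hj)
    have hs2 := hstep (j+1) (hdlt (j+1) hj1)
    rw [show j+1+1 = j+2 from rfl] at hs2
    obtain ⟨-, hmin, -⟩ := hnxt (d j) (hinv j).1.2 (hltN j (hdlt j hj))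
    have hcand : d j + 1 ≤ d (j+2) ∧ d (j+2) ≤ N ∧ h (d j) < h (d (j+2)) := by
      refine ⟨by have := hs1.2.1; have := hs2.2.1; omega, (hinv (j+2)).1.2,
        lt_trans hs1.2.2 hs2.2.2⟩
    have hw := hmin (d (j+2)) hcand.1 hcand.2.1 hcand.2.2
    rw [← hs1.1] at hw
    -- hw : slope (d j) (d (j+1)) ≤ slope (d j) (d (j+2))
    have dab : (0:ℝ) < h (d (j+1)) - h (d j) := sub_pos.mpr hs1.2.2
    have dbc : (0:ℝ) < h (d (j+2)) - h (d (j+1)) := sub_pos.mpr hs2.2.2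
    have dac : (0:ℝ) < h (d (j+2)) - h (d j) := by linarith
    rw [div_le_div_iff₀ dab dac] at hw
    rw [hk j, hk (j+1), div_le_div_iff₀ dab dbc]
    nlinarith [hw]
  have hμnn : ∀ j, j < L → 0 ≤ K (j+1) - K j := by
    intro j hj
    rcases eq_or_lt_of_le (Nat.succ_le_of_lt hj) with heq | hlt'
    · rw [hK (j+1), hK j, if_neg (by omega), if_pos hj]
      have := hknp j hj
      linarith
    · rw [hK (j+1), hK j, if_pos hlt', if_pos hj]
      have := hkconv j hlt'
      linarith
  -- evaluation of the convex minorant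
  have hγeval : ∀ m, m < L → ∀ y : ℝ, h (d m) ≤ y → y ≤ h (d (m+1)) →
      ∑ j ∈ Finset.range L, (K (j+1) - K j) * max (h (d (j+1)) - y) 0
        = r (d m) + k m * (y - h (d m)) := by
    intro m hmL y hy1 hy2
    have h0y : 0 ≤ y := le_trans (hnn (d m)) hy1
    have habel := morrison_abel K (fun j => max (h (d j) - y) 0) L
    have hS0 : max (h (d 0) - y) 0 = 0 := by
      rw [hd0, hz0]
      exact max_eq_right (by linarith)
    rw [hS0, hKL] at habel
    simp only [mul_zero, zero_mul, sub_zero, zero_add] at habel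
    rw [← habel]
    -- termwise identification with a telescoping sum
    have hg : ∀ j ∈ Finset.range L,
        K j * (max (h (d j) - y) 0 - max (h (d (j+1)) - y) 0)
          = (if j ≤ m then r (d m) + k m * (y - h (d m)) else r (d j))
            - (if j + 1 ≤ m then r (d m) + k m * (y - h (d m)) else r (d (j+1))) := by
      intro j hjr
      rw [Finset.mem_range] at hjr
      rcases lt_trichotomy j m with hlt | heq | hgt
      · have e1 : max (h (d j) - y) 0 = 0 :=
          max_eq_right (by
            have := hsmono j m (le_of_lt hlt) (le_of_lt hmL)
            linarith)
        have e2 : max (h (d (j+1)) - y) 0 = 0 :=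
          max_eq_right (by
            have := hsmono (j+1) m (by omega) (le_of_lt hmL)
            linarith)
        rw [e1, e2, if_pos (by omega : j ≤ m), if_pos (by omega : j + 1 ≤ m)]
        ring
      · subst heq
        have e1 : max (h (d j) - y) 0 = 0 := max_eq_right (by linarith)
        have e2 : max (h (d (j+1)) - y) 0 = h (d (j+1)) - y :=
          max_eq_left (by linarith)
        rw [e1, e2, if_pos (le_refl j), if_neg (by omega : ¬ j + 1 ≤ j)]
        rw [hK j, if_pos hjr, hkrel j hjr]
        ring
      · have e1 : max (h (d j) - y) 0 = h (d j) - y :=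
          max_eq_left (by
            have := hsmono (m+1) j (by omega) (le_of_lt hjr)
            linarith)
        have e2 : max (h (d (j+1)) - y) 0 = h (d (j+1)) - y :=
          max_eq_left (by
            have := hsmono (m+1) (j+1) (by omega) hjr
            linarith)
        rw [e1, e2, if_neg (by omega : ¬ j ≤ m), if_neg (by omega : ¬ j + 1 ≤ m)]
        rw [hK j, if_pos hjr, hkrel j hjr]
        ring
    rw [Finset.sum_congr rfl hg, Finset.sum_range_sub']
    rw [if_pos (Nat.zero_le m), if_neg (by omega : ¬ L ≤ m), hdL, hrN]
    ring
  -- minorance: the convex minorant is below r everywhere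
  have hminor : ∀ i, 1 ≤ i → i ≤ N →
      ∑ j ∈ Finset.range L, (K (j+1) - K j) * max (h (d (j+1)) - h i) 0 ≤ r i := by
    intro i h1i hiN
    by_cases hi0 : h i = 0
    · have he := hγeval 0 hL0 0 (by rw [hd0, hz0]) (hnn (d 1))
      rw [hi0, he, hd0, hz0]
      have : r z ≤ r i := rmono i z h1i (hzmax i h1i hiN hi0) hzN
      ring_nf
      linarith
    · have hipos : 0 < h i := lt_of_le_of_ne (hnn i) (Ne.symm hi0)
      have hPL : h i ≤ h (d L) := by rw [hdL]; exact hmono i N h1i hiN le_rfl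
      have hexm : ∃ m', h i ≤ h (d m') := ⟨L, hPL⟩
      have hm'spec : h i ≤ h (d (Nat.find hexm)) := Nat.find_spec hexm
      have hm'L : Nat.find hexm ≤ L := Nat.find_min' hexm hPL
      have hm'pos : 0 < Nat.find hexm := by
        rcases Nat.eq_zero_or_pos (Nat.find hexm) with h0 | hp
        · exfalso
          rw [h0] at hm'spec
          rw [hd0, hz0] at hm'spec
          linarith
        · exact hp
      set m := Nat.find hexm - 1 with hmdef
      have hm1 : m + 1 = Nat.find hexm := by omega
      have hmL : m < L := by omega
      have hnot : ¬ h i ≤ h (d m) := Nat.find_min hexm (by omega)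
      push_neg at hnot
      have he := hγeval m hmL (h i) (le_of_lt hnot) (by rw [hm1]; exact hm'spec)
      rw [he]
      -- greedy optimality at d m beats the point i
      have hdjN := hdlt m hmL
      obtain ⟨-, hmin, -⟩ := hnxt (d m) (hinv m).1.2 (hltN m hdjN)
      have hiw : d m + 1 ≤ i := by
        by_contra hc
        push_neg at hc
        exact absurd (hmono i (d m) h1i (by omega) (hinv m).1.2) (not_le.mpr hnot)
      have hs := hmin i hiw hiN hnot
      rw [← (hstep m hdjN).1] at hs
      rw [← hk m] at hs
      have hpos' : (0:ℝ) < h i - h (d m) := sub_pos.mpr hnot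
      rw [le_div_iff₀ hpos'] at hs
      linarith
  -- per-breakpoint inequality
  have hbrk : ∀ j, j < L →
      (h (d (j+1)))^2 ≤ B * ∑ i ∈ Finset.Icc 1 N, max (h (d (j+1)) - h i) 0 := by
    intro j hj
    have hw1 : 1 ≤ d (j+1) := (hinv (j+1)).1.1
    have hwN : d (j+1) ≤ N := (hinv (j+1)).1.2
    have hwpos : 0 < h (d (j+1)) := by
      have h01 : h (d 0) ≤ h (d j) := hsmono 0 j (Nat.zero_le j) (le_of_lt hj)
      have := hslt j hj
      rw [hd0, hz0] at h01
      linarith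
    have hw2 : 2 ≤ d (j+1) := by
      rcases Nat.lt_or_ge (d (j+1)) 2 with hc | hc
      · exfalso
        have he1 : d (j+1) = 1 := by omega
        rw [he1, h1] at hwpos
        exact lt_irrefl _ hwpos
      · exact hc
    refine le_trans (HB (d (j+1)) hw2 hwN) (mul_le_mul_of_nonneg_left ?_ hBnn)
    refine le_trans (Finset.sum_le_sum (fun i _ => le_max_left (h (d (j+1)) - h i) 0))
      (Finset.sum_le_sum_of_subset_of_nonneg (Finset.Icc_subset_Icc_right (by omega)) ?_)
    intro i _ _
    exact le_max_right _ _
  -- cost identity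
  have hcost : ∑ j ∈ Finset.range L, (r (d j) - r (d (j+1))) * (h (d j) + h (d (j+1)))
      = ∑ j ∈ Finset.range L, (K (j+1) - K j) * (h (d (j+1)))^2 := by
    have habel := morrison_abel K (fun j => (h (d j))^2) L
    have h1' : ∀ j ∈ Finset.range L,
        (r (d j) - r (d (j+1))) * (h (d j) + h (d (j+1)))
          = K j * ((h (d j))^2 - (h (d (j+1)))^2) := by
      intro j hj
      rw [Finset.mem_range] at hj
      rw [hK j, if_pos hj, hkrel j hj]
      ring
    rw [Finset.sum_congr rfl h1', habel, hKL]
    simp only [hd0, hz0]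
    ring
  -- the core bound
  have hCORE : ∑ j ∈ Finset.range L, (r (d j) - r (d (j+1))) * (h (d j) + h (d (j+1)))
      ≤ B * ∑ i ∈ Finset.Icc 1 N, r i := by
    rw [hcost]
    have step1 : ∑ j ∈ Finset.range L, (K (j+1) - K j) * (h (d (j+1)))^2
        ≤ ∑ j ∈ Finset.range L, (K (j+1) - K j) *
            (B * ∑ i ∈ Finset.Icc 1 N, max (h (d (j+1)) - h i) 0) := by
      refine Finset.sum_le_sum fun j hj => ?_
      rw [Finset.mem_range] at hj
      exact mul_le_mul_of_nonneg_left (hbrk j hj) (hμnn j hj)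
    refine le_trans step1 ?_
    have step2 : ∑ j ∈ Finset.range L, (K (j+1) - K j) *
        (B * ∑ i ∈ Finset.Icc 1 N, max (h (d (j+1)) - h i) 0)
        = B * ∑ i ∈ Finset.Icc 1 N,
            ∑ j ∈ Finset.range L, (K (j+1) - K j) * max (h (d (j+1)) - h i) 0 := by
      simp only [Finset.mul_sum]
      rw [Finset.sum_comm]
      exact Finset.sum_congr rfl fun i _ => Finset.sum_congr rfl fun j _ => by ring
    rw [step2]
    refine mul_le_mul_of_nonneg_left ?_ hBnn
    refine Finset.sum_le_sum fun i hi => ?_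
    rw [Finset.mem_Icc] at hi
    exact hminor i hi.1 hi.2
  -- assemble the chain for the sInf
  have hbdd : BddBelow {S : ℝ | ∃ (ℓ : ℕ) (c : ℕ → ℕ), 0 < ℓ ∧ c 0 = 1 ∧ c ℓ = N ∧
      (∀ j < ℓ, c j < c (j+1)) ∧ (∀ j ≤ ℓ, c j ≤ N) ∧
      S = ∑ j ∈ Finset.range ℓ, (r (c j) - r (c (j+1))) * (h (c j) + h (c (j+1)))} := by
    refine ⟨0, ?_⟩
    rintro x ⟨ℓ, c, hl0, hc0, hclN, hcinc, hcN, rfl⟩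
    have hge1 : ∀ j, j ≤ ℓ → 1 ≤ c j := by
      intro j
      induction j with
      | zero => intro _; rw [hc0]
      | succ j ih =>
        intro hj
        have h2 := hcinc j (by omega)
        have h3 := ih (by omega)
        omega
    refine Finset.sum_nonneg fun j hj => ?_
    rw [Finset.mem_range] at hj
    refine mul_nonneg (sub_nonneg.mpr (rmono (c j) (c (j+1)) (hge1 j (by omega))
      (le_of_lt (hcinc j hj)) (hcN (j+1) (by omega)))) (add_nonneg (hnn _) (hnn _))
  rcases eq_or_lt_of_le hz1 with hz1' | hz1'
  · -- z = 1 : the chain is d itself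
    refine le_trans (csInf_le hbdd ⟨L, d, hL0, by rw [hd0]; omega, hdL,
      (fun j hj => (hstep j (hdlt j hj)).2.1), (fun j _ => (hinv j).1.2), rfl⟩) hCORE
  · -- 1 < z : prepend the free edge (1, z)
    set c : ℕ → ℕ := fun j => if j = 0 then 1 else d (j - 1) with hcdef
    have hc0 : c 0 = 1 := by simp [hcdef]
    have hcsucc : ∀ j, c (j+1) = d j := by
      intro j
      simp [hcdef]
    have hsum : ∑ j ∈ Finset.range (L+1), (r (c j) - r (c (j+1))) * (h (c j) + h (c (j+1)))
        = ∑ j ∈ Finset.range L, (r (d j) - r (d (j+1))) * (h (d j) + h (d (j+1))) := by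
      rw [Finset.sum_range_succ']
      have hf0 : (r (c 0) - r (c 1)) * (h (c 0) + h (c 1)) = 0 := by
        rw [hc0, hcsucc 0, hd0, h1, hz0]
        ring
      rw [hf0, add_zero]
      refine Finset.sum_congr rfl fun j _ => ?_
      rw [hcsucc j, hcsucc (j+1)]
    refine le_trans (csInf_le hbdd ⟨L + 1, c, Nat.succ_pos L, hc0,
      by rw [hcsucc L, hdL], ?_, ?_, hsum.symm⟩) hCORE
    · intro j hj
      rcases Nat.eq_zero_or_pos j with h0 | hp
      · subst h0
        rw [hc0, hcsucc 0, hd0]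
        omega
      · obtain ⟨j', rfl⟩ : ∃ j', j = j' + 1 := ⟨j - 1, by omega⟩
        rw [hcsucc j', hcsucc (j'+1)]
        exact (hstep j' (hdlt j' (by omega))).2.1
    · intro j _
      rcases Nat.eq_zero_or_pos j with h0 | hp
      · subst h0; rw [hc0]; exact hN1
      · obtain ⟨j', rfl⟩ : ∃ j', j = j' + 1 := ⟨j - 1, by omega⟩
        rw [hcsucc j']
        exact (hinv j').1.2
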